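/- Let G ⊂ Diff^ω(ℝ,0) be a group of germs of real analytic diffeomorphisms generated by f₁,…,f_{ν+1} with f₁∘⋯∘f_{ν+1} = id, the fᵢ pairwise conjugate in G, and some fⱼ having multiplier a root of unity of order p^s (p prime, s ∈ ℕ). Then G is finite of order at most 2; and if s = 0 (i.e., the multiplier is 1), then G is trivial. -/

import Mathlib

open Filter Topology

namespace Paper

variable (𝕜 : Type) [NontriviallyNormedField 𝕜]

/-- Representatives of germs at `0` of analytic maps fixing `0`. -/
def A : Type := {f : 𝕜 → 𝕜 // AnalyticAt 𝕜 f 0 ∧ f 0 = 0}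

instance germSetoid : Setoid (A 𝕜) where
  r f g := f.1 =ᶠ[nhds (0 : 𝕜)] g.1
  iseqv := ⟨fun _ => Filter.EventuallyEq.rfl, Filter.EventuallyEq.symm,
    Filter.EventuallyEq.trans⟩

/-- Germs at `0` of analytic maps fixing `0`; a monoid under composition. -/
def M : Type := Quotient (germSetoid 𝕜)

variable {𝕜}

/-- Composition of representatives. -/
def compA (f g : A 𝕜) : A 𝕜 :=
  ⟨f.1 ∘ g.1, by
    constructor
    · exact AnalyticAt.comp (by rw [g.2.2]; exact f.2.1) g.2.1
    · simp [Function.comp_apply, g.2.2, f.2.2]⟩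

theorem compA_wd (f₁ f₂ g₁ g₂ : A 𝕜) (hf : f₁ ≈ f₂) (hg : g₁ ≈ g₂) :
    compA f₁ g₁ ≈ compA f₂ g₂ := by
  have hg0 : Filter.Tendsto g₁.1 (nhds 0) (nhds (0 : 𝕜)) := by
    have h := g₁.2.1.continuousAt
    rwa [ContinuousAt, g₁.2.2] at h
  exact (Filter.EventuallyEq.comp_tendsto hf hg0).trans (Filter.EventuallyEq.fun_comp hg f₂.1)

instance : Monoid (M 𝕜) where
  mul := Quotient.map₂ compA (fun _ _ hf _ _ hg => compA_wd _ _ _ _ hf hg)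
  one := Quotient.mk _ ⟨id, analyticAt_id, rfl⟩
  mul_assoc a b c := by
    induction a using Quotient.inductionOn with | _ f =>
    induction b using Quotient.inductionOn with | _ g =>
    induction c using Quotient.inductionOn with | _ h =>
    exact Quotient.sound (Filter.EventuallyEq.rfl)
  one_mul a := by
    induction a using Quotient.inductionOn with | _ f =>
    exact Quotient.sound (Filter.EventuallyEq.rfl)
  mul_one a := by
    induction a using Quotient.inductionOn with | _ f =>
    exact Quotient.sound (Filter.EventuallyEq.rfl)

/-- The group `Diff(𝕜,0)` of germs of analytic diffeomorphisms fixing `0`,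
realized as the units of the composition monoid of analytic germs fixing `0`. -/
abbrev Diff (𝕜 : Type) [NontriviallyNormedField 𝕜] : Type := (M 𝕜)ˣ

/-- The multiplier `f'(0)` of a germ. -/
noncomputable def multiplier : M 𝕜 → 𝕜 :=
  Quotient.lift (fun f => deriv f.1 0) (fun _ _ h => Filter.EventuallyEq.deriv_eq h)

theorem iteratedDeriv_wd (n : ℕ) (f g : 𝕜 → 𝕜) (h : f =ᶠ[nhds (0 : 𝕜)] g) :
    iteratedDeriv n f 0 = iteratedDeriv n g 0 := by
  induction n generalizing f g with
  | zero => simpa using h.eq_of_nhds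
  | succ n ih =>
      rw [iteratedDeriv_succ', iteratedDeriv_succ']
      exact ih _ _ h.deriv

/-- The `n`-th derivative at `0` of a germ. -/
noncomputable def dAt (n : ℕ) : M 𝕜 → 𝕜 :=
  Quotient.lift (fun f => iteratedDeriv n f.1 0) (fun _ _ h => iteratedDeriv_wd n _ _ h)

end Paper

open Paper

/-!
All generators are conjugate, so they share one multiplier `a`, and `f₁ ∘ ⋯ ∘ f_{ν+1} = id`
gives `a ^ (ν + 1) = 1`, so `a = ±1`. It therefore suffices to show that `G` contains no
nontrivial germ tangent to the identity: the multiplier then embeds `G` into `{±1}`.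

Suppose it does, and let `N` be the least `n` such that some tangent germ of `G` is
`x + c xⁿ + o(xⁿ)` with `c ≠ 0`. Every tangent germ of `G` then has such an expansion at
order `N`; its coefficient `c` is additive under composition and is multiplied by `λ ^ (N - 1)`
under conjugation by a germ of multiplier `λ`. If `a = 1`, the conjugate generators share one
coefficient `c`, and the relation gives `(ν + 1) c = 0`. If `a = -1`, the tangent part of `G`
is generated by the products `fᵢ fⱼ`. For `N` odd all of these have the same coefficient and
the relation, a product of an even number of generators, kills it; for `N` even each of their
coefficients is twice an element of the finitely generated group they span, which is
therefore zero.
-/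

open Asymptotics
open scoped Pointwise

section TangentExpansion

variable {𝕜 : Type*} [NontriviallyNormedField 𝕜]

def HasTangentExpansion (n : ℕ) (c : 𝕜) (f : 𝕜 → 𝕜) : Prop :=
  (fun x => f x - x - c * x ^ n) =o[𝓝 0] (· ^ n)

theorem hasTangentExpansion_id (n : ℕ) : HasTangentExpansion n (0 : 𝕜) id := by
  simp [HasTangentExpansion]

theorem hasTangentExpansion_one_zero {f : 𝕜 → 𝕜} (hf : HasDerivAt f 1 0) (hf0 : f 0 = 0) :
    HasTangentExpansion 1 0 f := by
  simpa [HasTangentExpansion, hf0] using hasDerivAt_iff_isLittleO.mp hf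

namespace HasTangentExpansion

variable {n m : ℕ} {a b c : 𝕜} {f g : 𝕜 → 𝕜}

theorem congr (hf : HasTangentExpansion n c f) (hfg : f =ᶠ[𝓝 0] g) :
    HasTangentExpansion n c g :=
  hf.congr' (hfg.mono fun x hx => by simp only [hx]) EventuallyEq.rfl

theorem unique (ha : HasTangentExpansion n a f) (hb : HasTangentExpansion n b f) : a = b := by
  have hpow : ∃ᶠ x in 𝓝 (0 : 𝕜), x ^ n ≠ 0 :=
    (eventually_nhdsWithin_of_forall (s := {0}ᶜ) fun x hx =>
      pow_ne_zero n hx).frequently.filter_mono nhdsWithin_le_nhds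
  by_contra hab
  refine isLittleO_irrefl hpow
    ((isLittleO_const_mul_left_iff (sub_ne_zero.mpr (Ne.symm hab))).mp ?_)
  exact (ha.sub hb).congr_left fun x => by ring

theorem isBigO_sub_id (hf : HasTangentExpansion n c f) :
    (fun x => f x - x) =O[𝓝 0] (· ^ n) :=
  (hf.isBigO.add (isBigO_const_mul_self c _ _)).congr_left fun x => by ring

theorem of_lt (hf : HasTangentExpansion n c f) (hmn : m < n) : HasTangentExpansion m 0 f :=
  (hf.isBigO_sub_id.trans_isLittleO (isLittleO_pow_pow hmn)).congr_left fun x => by ring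

theorem isEquivalent (hf : HasTangentExpansion n c f) (hn : 1 < n) : f ~[𝓝 0] id :=
  (hf.isBigO_sub_id.trans_isLittleO (isLittleO_pow_id hn)).congr_left fun _ => rfl

theorem isLittleO_comp (hf : HasTangentExpansion n c f) {v : 𝕜 → 𝕜} (hg : g ~[𝓝 0] v)
    (hv : Tendsto v (𝓝 0) (𝓝 0)) :
    (fun x => f (g x) - g x - c * v x ^ n) =o[𝓝 0] (fun x => v x ^ n) := by
  have hg0 : Tendsto g (𝓝 0) (𝓝 0) := hg.symm.tendsto_nhds hv
  have hgn : (fun x => g x ^ n) ~[𝓝 0] (fun x => v x ^ n) := hg.pow n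
  refine ((hf.comp_tendsto hg0).trans_isBigO hgn.isBigO |>.add
    (hgn.isLittleO.const_mul_left c)).congr_left fun x => ?_
  simp only [Function.comp, Pi.sub_apply]
  ring

theorem comp (hf : HasTangentExpansion n a f) (hg : HasTangentExpansion n b g) (hn : 1 < n) :
    HasTangentExpansion n (a + b) (f ∘ g) :=
  ((hf.isLittleO_comp (hg.isEquivalent hn) tendsto_id).add hg).congr_left fun x => by
    simp only [Function.comp, id]; ring

theorem of_comp_eq_id (hf : HasTangentExpansion n c f) (hn : 1 < n)
    (hg : Tendsto g (𝓝 0) (𝓝 0)) (hfg : f ∘ g =ᶠ[𝓝 0] id) :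
    HasTangentExpansion n (-c) g := by
  have hgid : g ~[𝓝 0] id :=
    (((hf.isEquivalent hn).comp_tendsto hg).congr_left hfg).symm
  refine (hf.isLittleO_comp hgid tendsto_id).neg_left.congr' (hfg.mono fun x hx => ?_)
    EventuallyEq.rfl
  simp only [Function.comp, id] at hx
  simp only [hx, id]
  ring

theorem of_conj {k u φ : 𝕜 → 𝕜} {μ : 𝕜} (hk : HasTangentExpansion n c k) (hn : n ≠ 0)
    (hu : HasStrictDerivAt u μ 0) (hμ : μ ≠ 0) (hu0 : u 0 = 0)
    (hφ : Tendsto φ (𝓝 0) (𝓝 0))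
    (h : u ∘ φ =ᶠ[𝓝 0] k ∘ u) : HasTangentExpansion n (μ ^ (n - 1) * c) φ := by
  -- Strict differentiability of `u` gives `u (φ x) - u x = μ (φ x - x) + o(φ x - x)`, while
  -- `h` turns the left side into `k (u x) - u x = μ ^ n c xⁿ + o(xⁿ)`.
  have hE : (fun x => u (φ x) - u x - μ * (φ x - x)) =o[𝓝 0] (fun x => μ * (φ x - x)) := by
    have := hu.hasStrictFDerivAt.isLittleO.comp_tendsto
      ((hφ.prodMk_nhds tendsto_id : Tendsto (fun x => (φ x, x)) (𝓝 0) (𝓝 (0, 0))))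
    refine ((isLittleO_const_mul_right_iff hμ).mpr this).congr_left fun x => ?_
    simp [mul_comm]
  have hueq : u ~[𝓝 0] (fun x => μ * x) := by
    refine (isLittleO_const_mul_right_iff hμ).mpr ?_
    change (fun x => u x - μ * x) =o[𝓝 0] fun x => x
    simpa [hu0, mul_comm] using hasDerivAt_iff_isLittleO.mp hu.hasDerivAt
  have hR : (fun x => k (u x) - u x - μ ^ n * c * x ^ n) =o[𝓝 0] (· ^ n) := by
    have := hk.isLittleO_comp hueq ((continuous_const_mul μ).tendsto' 0 0 (mul_zero μ))
    simp only [mul_pow] at this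
    exact ((isLittleO_const_mul_right_iff (pow_ne_zero n hμ)).mp this).congr_left
      fun x => by ring
  have hu_sub : (fun x => u (φ x) - u x) =ᶠ[𝓝 0] fun x => k (u x) - u x :=
    h.mono fun x hx => by simp only [Function.comp] at hx ⊢; rw [hx]
  have hψ : (fun x => μ * (φ x - x)) =O[𝓝 0] (· ^ n) := by
    refine hE.right_isBigO_add.trans ?_
    refine IsBigO.congr' (hR.isBigO.add (isBigO_const_mul_self (μ ^ n * c) _ _)) ?_
      EventuallyEq.rfl
    exact hu_sub.mono fun x hx => by simp only at hx ⊢; rw [hx]; ring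
  obtain ⟨m, rfl⟩ := Nat.exists_eq_add_one_of_ne_zero hn
  refine (isLittleO_const_mul_left_iff hμ).mp ((hR.sub (hE.trans_isBigO hψ)).congr' ?_
    EventuallyEq.rfl)
  exact hu_sub.mono fun x hx => by simp only [Nat.add_sub_cancel] at hx ⊢; rw [← hx]; ring

end HasTangentExpansion

theorem AnalyticAt.exists_hasTangentExpansion {f : 𝕜 → 𝕜} (hf : AnalyticAt 𝕜 f 0)
    (hf0 : f 0 = 0) (hf1 : deriv f 0 = 1) (hfid : ¬f =ᶠ[𝓝 0] id) :
    ∃ n, 1 < n ∧ ∃ c ≠ 0, HasTangentExpansion n c f := by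
  have hA : AnalyticAt 𝕜 (fun x => f x - x) 0 := hf.sub analyticAt_id
  have hord : analyticOrderAt (fun x => f x - x) 0 ≠ ⊤ := fun h =>
    hfid ((analyticOrderAt_eq_top.mp h).mono fun x hx => sub_eq_zero.mp hx)
  obtain ⟨n, hn⟩ := WithTop.ne_top_iff_exists.mp hord
  obtain ⟨q, hq, hq0, hfq⟩ := hA.analyticOrderAt_eq_natCast.mp hn.symm
  have hexp : HasTangentExpansion n (q 0) f := by
    have hqo : (fun x => q x - q 0) =o[𝓝 0] (fun _ => (1 : 𝕜)) :=
      (isLittleO_one_iff 𝕜).mpr (tendsto_sub_nhds_zero_iff.mpr hq.continuousAt.tendsto)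
    refine ((isBigO_refl (· ^ n) _).mul_isLittleO hqo).congr' (hfq.mono fun x hx => ?_)
      (Eventually.of_forall fun x => mul_one _)
    simp only [sub_zero, smul_eq_mul] at hx
    simp only [hx]
    ring
  refine ⟨n, ?_, q 0, hq0, hexp⟩
  rcases n with _ | _ | n
  · exact absurd (by simpa [hf0] using hfq.self_of_nhds.symm) hq0
  · exact absurd (hexp.unique (hasTangentExpansion_one_zero
      (hf1 ▸ hf.differentiableAt.hasDerivAt) hf0)) hq0
  · omega

end TangentExpansion

theorem Subgroup.mem_closure_mul_self_or {G : Type*} [Group G] {S : Set G} {g : G}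
    (hg : g ∈ Subgroup.closure S) :
    g ∈ Subgroup.closure (S * S) ∨ ∀ s ∈ S, s * g ∈ Subgroup.closure (S * S) := by
  have hSS : ∀ s ∈ S, ∀ t ∈ S, s * t ∈ Subgroup.closure (S * S) := fun s hs t ht =>
    Subgroup.subset_closure (Set.mul_mem_mul hs ht)
  induction hg using Subgroup.closure_induction_left with
  | one => exact Or.inl (one_mem _)
  | mul_left x hx y _ ih =>
    rcases ih with hy | hy
    · exact Or.inr fun s hs => mul_assoc s x y ▸ mul_mem (hSS s hs x hx) hy
    · exact Or.inl (hy x hx)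
  | inv_mul_cancel x hx y _ ih =>
    rcases ih with hy | hy
    · refine Or.inr fun s hs => ?_
      rw [show s * (x⁻¹ * y) = s * x * (x * x)⁻¹ * y by group]
      exact mul_mem (mul_mem (hSS s hs x hx) (inv_mem (hSS x hx x hx))) hy
    · rw [show x⁻¹ * y = (x * x)⁻¹ * (x * y) by group]
      exact Or.inl (mul_mem (inv_mem (hSS x hx x hx)) (hy x hx))

theorem Subgroup.exists_conj_mem_closure_mul_self {G : Type*} [Group G] {S : Set G} {x y : G}
    (hx : x ∈ S) (h : ∃ g ∈ Subgroup.closure S, x * g = g * y) :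
    ∃ g ∈ Subgroup.closure (S * S), g⁻¹ * x * g = y := by
  obtain ⟨g, hg, hxg⟩ := h
  have hy : g⁻¹ * x * g = y := by rw [mul_assoc, hxg]; group
  rcases Subgroup.mem_closure_mul_self_or hg with hg | hg
  · exact ⟨g, hg, hy⟩
  · exact ⟨x * g, hg x hx, by rw [← hy]; group⟩

theorem AddSubgroup.closure_eq_bot_of_forall_eq_two_nsmul {M : Type*} [AddCommGroup M]
    [IsAddTorsionFree M] {S : Set M} (hS : S.Finite)
    (h : ∀ s ∈ S, ∃ y ∈ AddSubgroup.closure S, s = 2 • y) :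
    AddSubgroup.closure S = ⊥ := by
  classical
  rw [← Submodule.span_int_eq_addSubgroupClosure] at h ⊢
  have hfg : (Submodule.span ℤ S).FG := ⟨hS.toFinset, by simp⟩
  have hle : Submodule.span ℤ S ≤ Ideal.span {(2 : ℤ)} • Submodule.span ℤ S :=
    Submodule.span_le.mpr fun s hs => by
      obtain ⟨y, hy, rfl⟩ := h s hs
      have := Submodule.smul_mem_smul (Ideal.mem_span_singleton_self (2 : ℤ)) hy
      rwa [two_smul, ← two_nsmul] at this
  -- Nakayama: the span is twice itself, so some odd `r` annihilates it.
  obtain ⟨r, hr1, hr⟩ :=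
    Submodule.exists_sub_one_mem_and_smul_eq_zero_of_fg_of_le_smul _ _ hfg hle
  have hr0 : r ≠ 0 := by
    rintro rfl
    norm_num [Ideal.mem_span_singleton] at hr1
  rw [eq_bot_iff]
  exact fun x hx => (IsAddTorsionFree.zsmul_eq_zero_iff.mp (hr x hx)).resolve_right hr0

namespace Paper

variable {𝕜 : Type} [NontriviallyNormedField 𝕜]

theorem A.tendsto_zero (g : A 𝕜) : Tendsto g.1 (𝓝 0) (𝓝 0) := by
  simpa [ContinuousAt, g.2.2] using g.2.1.continuousAt

noncomputable def multiplierHom : M 𝕜 →* 𝕜 where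
  toFun := multiplier
  map_one' := deriv_id 0
  map_mul' a b := by
    induction a using Quotient.inductionOn with | _ f =>
    induction b using Quotient.inductionOn with | _ g =>
    have hf : DifferentiableAt 𝕜 f.1 (g.1 0) := by rw [g.2.2]; exact f.2.1.differentiableAt
    show deriv (f.1 ∘ g.1) 0 = deriv f.1 0 * deriv g.1 0
    rw [deriv_comp _ hf g.2.1.differentiableAt, g.2.2]

theorem multiplier_mul (a b : M 𝕜) : multiplier (a * b) = multiplier a * multiplier b :=
  multiplierHom.map_mul a b

@[simp]
theorem multiplierHom_apply (k : M 𝕜) : multiplierHom k = multiplier k :=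
  rfl

theorem multiplier_one : multiplier (1 : M 𝕜) = 1 :=
  multiplierHom.map_one

theorem multiplier_inv (u : Diff 𝕜) : multiplier (u⁻¹).val = (multiplier u.val)⁻¹ :=
  eq_inv_of_mul_eq_one_right (by rw [← multiplier_mul, Units.mul_inv, multiplier_one])

theorem multiplier_ne_zero (u : Diff 𝕜) : multiplier u.val ≠ 0 :=
  (u.isUnit.map multiplierHom).ne_zero

theorem mem_ker_multiplierHom {u : Diff 𝕜} :
    u ∈ (Units.map (multiplierHom (𝕜 := 𝕜))).ker ↔ multiplier u.val = 1 := by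
  rw [MonoidHom.mem_ker, Units.ext_iff]
  rfl

theorem multiplier_eq_of_mul_eq_mul {u v g : Diff 𝕜} (h : u * g = g * v) :
    multiplier u.val = multiplier v.val :=
  mul_right_cancel₀ (multiplier_ne_zero g) <| by
    rw [← multiplier_mul, mul_comm, ← multiplier_mul]
    exact congrArg (multiplier ∘ Units.val) h

theorem multiplier_prod_ofFn {ν : ℕ} (f : Fin ν → Diff 𝕜) :
    multiplier (List.ofFn f).prod.val = ∏ i, multiplier (f i).val := by
  rw [← List.prod_ofFn]
  exact map_list_prod (multiplierHom.comp (Units.coeHom (M 𝕜))) (List.ofFn f) |>.trans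
    (by rw [List.map_ofFn]; rfl)

def M.HasTangentExpansion (n : ℕ) (c : 𝕜) : M 𝕜 → Prop :=
  Quotient.lift (fun g => _root_.HasTangentExpansion n c g.1) fun _ _ h =>
    propext ⟨fun hf => hf.congr h, fun hf => hf.congr (Setoid.symm h)⟩

theorem M.hasTangentExpansion_one (n : ℕ) : (1 : M 𝕜).HasTangentExpansion n 0 :=
  hasTangentExpansion_id n

theorem M.exists_hasTangentExpansion {k : M 𝕜} (hk : multiplier k = 1) (hk1 : k ≠ 1) :
    ∃ n, 1 < n ∧ ∃ c ≠ 0, k.HasTangentExpansion n c := by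
  induction k using Quotient.inductionOn with | _ g =>
  exact g.2.1.exists_hasTangentExpansion g.2.2 hk fun h => hk1 (Quotient.sound h)

namespace M.HasTangentExpansion

variable {n m : ℕ} {a b c : 𝕜}

theorem unique {k : M 𝕜} (ha : k.HasTangentExpansion n a) (hb : k.HasTangentExpansion n b) :
    a = b := by
  induction k using Quotient.inductionOn with | _ g =>
  exact _root_.HasTangentExpansion.unique ha hb

theorem of_lt {k : M 𝕜} (hk : k.HasTangentExpansion n c) (hmn : m < n) :
    k.HasTangentExpansion m 0 := by
  induction k using Quotient.inductionOn with | _ g =>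
  exact _root_.HasTangentExpansion.of_lt hk hmn

theorem mul {k₁ k₂ : M 𝕜} (h₁ : k₁.HasTangentExpansion n a)
    (h₂ : k₂.HasTangentExpansion n b) (hn : 1 < n) :
    (k₁ * k₂).HasTangentExpansion n (a + b) := by
  induction k₁ using Quotient.inductionOn with | _ f =>
  induction k₂ using Quotient.inductionOn with | _ g =>
  exact _root_.HasTangentExpansion.comp (f := f.1) (g := g.1) h₁ h₂ hn

theorem inv {u : Diff 𝕜} (hu : u.val.HasTangentExpansion n c) (hn : 1 < n) :
    (u⁻¹).val.HasTangentExpansion n (-c) := by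
  obtain ⟨f, hf⟩ := Quotient.exists_rep u.val
  obtain ⟨g, hg⟩ := Quotient.exists_rep (u⁻¹).val
  have hmk := Units.mul_inv u
  rw [← hf, ← hg] at hmk
  have hfg : f.1 ∘ g.1 =ᶠ[𝓝 0] id :=
    Quotient.exact (s := germSetoid 𝕜) (a := compA f g) (b := ⟨id, analyticAt_id, rfl⟩) hmk
  rw [← hf] at hu
  rw [← hg]
  exact _root_.HasTangentExpansion.of_comp_eq_id hu hn g.tendsto_zero hfg

theorem conj {k : Diff 𝕜} (hk : k.val.HasTangentExpansion n c) (u : Diff 𝕜) (hn : n ≠ 0) :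
    (u⁻¹ * k * u).val.HasTangentExpansion n (multiplier u.val ^ (n - 1) * c) := by
  obtain ⟨a, ha⟩ := Quotient.exists_rep u.val
  obtain ⟨κ, hκ⟩ := Quotient.exists_rep k.val
  obtain ⟨φ, hφ⟩ := Quotient.exists_rep (u⁻¹ * k * u).val
  have hmk : u.val * (u⁻¹ * k * u).val = k.val * u.val := by
    rw [← Units.val_mul, ← Units.val_mul]
    group
  rw [← ha, ← hφ, ← hκ] at hmk
  have hrel : a.1 ∘ φ.1 =ᶠ[𝓝 0] κ.1 ∘ a.1 :=
    Quotient.exact (s := germSetoid 𝕜) (a := compA a φ) (b := compA κ a) hmk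
  have hμ : multiplier u.val = deriv a.1 0 := by rw [← ha]; rfl
  rw [← hκ] at hk
  rw [← hφ, hμ]
  exact _root_.HasTangentExpansion.of_conj hk hn a.2.1.hasStrictDerivAt
    (hμ ▸ multiplier_ne_zero u) a.2.2 φ.tendsto_zero hrel

end M.HasTangentExpansion

def tangentSubgroup (n : ℕ) (hn : 1 < n) (L : AddSubgroup 𝕜) : Subgroup (Diff 𝕜) where
  carrier := {u | ∃ c ∈ L, u.val.HasTangentExpansion n c}
  mul_mem' := fun ⟨a, ha, hu⟩ ⟨b, hb, hv⟩ => ⟨a + b, L.add_mem ha hb, hu.mul hv hn⟩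
  one_mem' := ⟨0, L.zero_mem, M.hasTangentExpansion_one n⟩
  inv_mem' := fun ⟨c, hc, hu⟩ => ⟨-c, L.neg_mem hc, hu.inv hn⟩

theorem hasTangentExpansion_list_prod {n : ℕ} (hn : 1 < n) {c : 𝕜} {l : List (Diff 𝕜)}
    (hl : ∀ u ∈ l, u.val.HasTangentExpansion n c) :
    l.prod.val.HasTangentExpansion n (l.length * c) := by
  induction l with
  | nil => simpa using M.hasTangentExpansion_one n
  | cons u l ih =>
    have h : (u * l.prod).val.HasTangentExpansion n (c + l.length * c) :=
      (hl u List.mem_cons_self).mul (ih fun v hv => hl v (List.mem_cons_of_mem u hv)) hn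
    rw [List.prod_cons, List.length_cons, Nat.cast_succ]
    convert h using 1
    ring

theorem hasTangentExpansion_list_prod_of_pairs {n : ℕ} (hn : 1 < n) {c : 𝕜}
    {S : Set (Diff 𝕜)} (hS : ∀ u ∈ S, ∀ v ∈ S, (u * v).val.HasTangentExpansion n c)
    (k : ℕ) {l : List (Diff 𝕜)} (hl : ∀ u ∈ l, u ∈ S) (hlen : l.length = 2 * k) :
    l.prod.val.HasTangentExpansion n (k * c) := by
  induction k generalizing l with
  | zero => simpa [List.length_eq_zero_iff.mp (by simpa using hlen)] using
      M.hasTangentExpansion_one n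
  | succ k ih =>
    obtain ⟨u, v, l, rfl⟩ : ∃ u v l', l = u :: v :: l' := by
      rcases l with _ | ⟨u, _ | ⟨v, l⟩⟩ <;> simp at hlen ⊢; omega
    have h : (u * v * l.prod).val.HasTangentExpansion n (c + k * c) :=
      (hS u (hl u (by simp)) v (hl v (by simp))).mul
        (ih (l := l) (fun w hw => hl w (by simp [hw])) (by simp at hlen; omega)) hn
    rw [List.prod_cons, List.prod_cons, ← mul_assoc, Nat.cast_succ]
    convert h using 1
    ring

theorem exists_common_tangentOrder {G : Subgroup (Diff 𝕜)}
    (hG : ∃ g ∈ G, multiplier g.val = 1 ∧ g ≠ 1) :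
    ∃ N, ∃ hN : 1 < N,
      (∃ g ∈ G, multiplier g.val = 1 ∧ ∃ c ≠ 0, g.val.HasTangentExpansion N c) ∧
      ∀ g ∈ G, multiplier g.val = 1 → g ∈ tangentSubgroup N hN ⊤ := by
  classical
  have hex : ∃ n, 1 < n ∧
      ∃ g ∈ G, multiplier g.val = 1 ∧ ∃ c ≠ 0, g.val.HasTangentExpansion n c := by
    obtain ⟨g, hg, hg1, hne⟩ := hG
    obtain ⟨n, hn, h⟩ := M.exists_hasTangentExpansion hg1 (mt Units.val_eq_one.mp hne)
    exact ⟨n, hn, g, hg, hg1, h⟩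
  obtain ⟨hN, hwit⟩ := Nat.find_spec hex
  refine ⟨Nat.find hex, hN, hwit, fun g hg hg1 => ?_⟩
  by_cases h1 : g = 1
  · exact h1 ▸ one_mem _
  obtain ⟨n, hn, c, hc, h⟩ := M.exists_hasTangentExpansion hg1 (mt Units.val_eq_one.mp h1)
  rcases (Nat.find_min' hex ⟨hn, g, hg, hg1, c, hc, h⟩).lt_or_eq with hlt | rfl
  · exact ⟨0, trivial, h.of_lt hlt⟩
  · exact ⟨c, trivial, h⟩

theorem closure_eq_bot_of_multiplier_eq_one [CharZero 𝕜] {ν : ℕ}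
    {f : Fin (ν + 1) → Diff 𝕜}
    (hf : ∀ i, multiplier (f i).val = 1) (hcomp : (List.ofFn f).prod = 1)
    (hconj : ∀ i j, ∃ g ∈ Subgroup.closure (Set.range f), f i * g = g * f j) :
    Subgroup.closure (Set.range f) = ⊥ := by
  set G := Subgroup.closure (Set.range f)
  have hG1 : ∀ g ∈ G, multiplier g.val = 1 := fun g hg =>
    mem_ker_multiplierHom.mp <| (Subgroup.closure_le _).mpr
      (Set.range_subset_iff.mpr fun i => mem_ker_multiplierHom.mpr (hf i)) hg
  by_contra hne
  obtain ⟨⟨g, hg⟩, hg1⟩ := Subgroup.ne_bot_iff_exists_ne_one.mp hne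
  obtain ⟨N, hN, ⟨g₀, hg₀, -, c₀, hc₀, hexp₀⟩, hGN⟩ :=
    exists_common_tangentOrder (G := G) ⟨g, hg, hG1 g hg, fun h => hg1 (Subtype.ext h)⟩
  choose c _ hc using fun i => hGN (f i) (Subgroup.subset_closure ⟨i, rfl⟩) (hf i)
  have hc_eq : ∀ i, c i = c 0 := fun i => by
    obtain ⟨g, hg, hgi⟩ := hconj 0 i
    have h := (hc 0).conj g (by omega)
    rw [show g⁻¹ * f 0 * g = f i by rw [mul_assoc, hgi]; group, hG1 g hg, one_pow, one_mul] at h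
    exact (hc i).unique h
  have hc0 : c 0 = 0 := by
    have h := hasTangentExpansion_list_prod hN (l := List.ofFn f) (c := c 0) fun u hu => by
      obtain ⟨i, rfl⟩ := List.mem_ofFn.mp hu
      exact hc_eq i ▸ hc i
    rw [hcomp, List.length_ofFn] at h
    simpa [Nat.cast_add_one_ne_zero] using (M.hasTangentExpansion_one N).unique h
  have hGN0 : G ≤ tangentSubgroup N hN ⊥ :=
    (Subgroup.closure_le _).mpr <| Set.range_subset_iff.mpr fun i =>
      ⟨c i, by rw [hc_eq, hc0]; rfl, hc i⟩
  obtain ⟨c', hc', h'⟩ := hGN0 hg₀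
  exact hc₀ ((hexp₀.unique h').trans hc')

section Reflections

open Subgroup

variable {ν : ℕ} {f : Fin (ν + 1) → Diff 𝕜}

theorem multiplier_eq_one_of_mem_closure_mul_self (hf : ∀ i, multiplier (f i).val = -1)
    {k : Diff 𝕜} (hk : k ∈ closure (Set.range f * Set.range f)) : multiplier k.val = 1 := by
  refine mem_ker_multiplierHom.mp ((closure_le _).mpr ?_ hk)
  rintro _ ⟨_, ⟨i, rfl⟩, _, ⟨j, rfl⟩, rfl⟩
  rw [SetLike.mem_coe, mem_ker_multiplierHom, Units.val_mul, multiplier_mul, hf, hf]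
  norm_num

theorem mem_closure_mul_self_of_multiplier_eq_one [CharZero 𝕜]
    (hf : ∀ i, multiplier (f i).val = -1) {g : Diff 𝕜} (hg : g ∈ closure (Set.range f))
    (hg1 : multiplier g.val = 1) : g ∈ closure (Set.range f * Set.range f) := by
  refine (mem_closure_mul_self_or hg).resolve_right fun h => ?_
  have := multiplier_eq_one_of_mem_closure_mul_self hf (h (f 0) ⟨0, rfl⟩)
  rw [Units.val_mul, multiplier_mul, hf, hg1] at this
  norm_num at this

variable {N : ℕ} {d : Fin (ν + 1) → Fin (ν + 1) → 𝕜}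

theorem closure_mul_self_le_tangentSubgroup (hN : 1 < N)
    (hd : ∀ i j, (f i * f j).val.HasTangentExpansion N (d i j)) {L : AddSubgroup 𝕜}
    (hL : ∀ i j, d i j ∈ L) :
    closure (Set.range f * Set.range f) ≤ tangentSubgroup N hN L := by
  refine (closure_le _).mpr ?_
  rintro _ ⟨_, ⟨i, rfl⟩, _, ⟨j, rfl⟩, rfl⟩
  exact ⟨d i j, hL i j, hd i j⟩

theorem exists_coeff_eq_of_conj (hN : 1 < N)
    (hd : ∀ i j, (f i * f j).val.HasTangentExpansion N (d i j))
    (hf : ∀ i, multiplier (f i).val = -1)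
    (hconj : ∀ i j, ∃ g ∈ closure (Set.range f), f i * g = g * f j) (i j : Fin (ν + 1)) :
    ∃ r ∈ AddSubgroup.closure (Set.range (Function.uncurry d)),
      d i j = d i i + (1 - (-1) ^ (N - 1)) * r ∧ d j j = d i i := by
  obtain ⟨g, hgK, hg⟩ := exists_conj_mem_closure_mul_self (Set.mem_range_self i) (hconj i j)
  obtain ⟨r, hrL, hr⟩ := closure_mul_self_le_tangentSubgroup hN hd
    (L := AddSubgroup.closure (Set.range (Function.uncurry d)))
    (fun i j => AddSubgroup.subset_closure ⟨(i, j), rfl⟩) hgK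
  refine ⟨r, hrL, ?_, ?_⟩
  · have h : (((f i)⁻¹)⁻¹ * g⁻¹ * (f i)⁻¹ * (f i * f i) * g).val.HasTangentExpansion N
        (multiplier ((f i)⁻¹).val ^ (N - 1) * -r + d i i + r) :=
      (((hr.inv hN).conj (f i)⁻¹ (by omega)).mul (hd i i) hN).mul hr hN
    rw [show ((f i)⁻¹)⁻¹ * g⁻¹ * (f i)⁻¹ * (f i * f i) * g = f i * f j by
        rw [← hg]; group,
      multiplier_inv, hf, inv_neg, inv_one] at h
    rw [(hd i j).unique h]
    ring
  · have h := (hd i i).conj g (by omega)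
    rw [show g⁻¹ * (f i * f i) * g = f j * f j by rw [← hg]; group,
      multiplier_eq_one_of_mem_closure_mul_self hf hgK, one_pow, one_mul] at h
    exact (hd j j).unique h

theorem coeff_mul_eq_zero [CharZero 𝕜] (hN : 1 < N)
    (hd : ∀ i j, (f i * f j).val.HasTangentExpansion N (d i j))
    (hf : ∀ i, multiplier (f i).val = -1) (hcomp : (List.ofFn f).prod = 1)
    (hconj : ∀ i j, ∃ g ∈ closure (Set.range f), f i * g = g * f j) (i j : Fin (ν + 1)) :
    d i j = 0 := by
  have hrel := exists_coeff_eq_of_conj hN hd hf hconj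
  rcases neg_one_pow_eq_or 𝕜 (N - 1) with hε | hε
  · have hδ : ∀ i j, d i j = d 0 0 := fun i j => by
      obtain ⟨r, -, h, -⟩ := hrel i j
      obtain ⟨-, -, -, h'⟩ := hrel 0 i
      rw [h, h', hε, sub_self, zero_mul, add_zero]
    obtain ⟨K, hK⟩ : Even (ν + 1) := by
      have h := multiplier_prod_ofFn f
      simp only [hcomp, hf, Finset.prod_const, Finset.card_univ, Fintype.card_fin] at h
      exact (neg_one_pow_eq_one_iff_even (by norm_num)).mp (h.symm.trans multiplier_one)
    have h := hasTangentExpansion_list_prod_of_pairs hN (S := Set.range f) (c := d 0 0)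
      (by rintro _ ⟨i, rfl⟩ _ ⟨j, rfl⟩; exact hδ i j ▸ hd i j) K (l := List.ofFn f)
      (fun u hu => List.mem_ofFn.mp hu) (by rw [List.length_ofFn]; omega)
    rw [hcomp] at h
    have hK0 : (K : 𝕜) ≠ 0 := Nat.cast_ne_zero.mpr (by omega)
    rw [hδ, ← (mul_eq_zero.mp ((M.hasTangentExpansion_one N).unique h).symm).resolve_left hK0]
  · have hdiag : ∀ i, d i i = 0 := fun i => by
      have h := (hd i i).conj (f i) (by omega)
      rw [show (f i)⁻¹ * (f i * f i) * f i = f i * f i by group, hf, hε, neg_one_mul] at h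
      exact self_eq_neg.mp ((hd i i).unique h)
    have hL := AddSubgroup.closure_eq_bot_of_forall_eq_two_nsmul
        (S := Set.range (Function.uncurry d)) (Set.finite_range _) <| by
      rintro _ ⟨⟨i, j⟩, rfl⟩
      obtain ⟨r, hr, h, -⟩ := hrel i j
      exact ⟨r, hr, by simp only [Function.uncurry_apply_pair, h, hdiag, hε, two_nsmul]; ring⟩
    exact (AddSubgroup.mem_bot.mp (hL ▸ AddSubgroup.subset_closure ⟨(i, j), rfl⟩))

theorem eq_one_of_mem_closure_of_multiplier_eq_one [CharZero 𝕜]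
    (hf : ∀ i, multiplier (f i).val = -1)
    (hcomp : (List.ofFn f).prod = 1)
    (hconj : ∀ i j, ∃ g ∈ closure (Set.range f), f i * g = g * f j)
    {g : Diff 𝕜} (hg : g ∈ closure (Set.range f)) (hg1 : multiplier g.val = 1) : g = 1 := by
  by_contra hne
  obtain ⟨N, hN, ⟨g₀, hg₀, hg₀1, c₀, hc₀, hexp₀⟩, hGN⟩ :=
    exists_common_tangentOrder ⟨g, hg, hg1, hne⟩
  choose d _ hd using fun i j => hGN (f i * f j)
    (mul_mem (subset_closure ⟨i, rfl⟩) (subset_closure ⟨j, rfl⟩))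
    (multiplier_eq_one_of_mem_closure_mul_self hf
      (subset_closure ⟨_, ⟨i, rfl⟩, _, ⟨j, rfl⟩, rfl⟩))
  obtain ⟨c, hc, h⟩ := closure_mul_self_le_tangentSubgroup hN hd (L := ⊥)
    (fun i j => coeff_mul_eq_zero hN hd hf hcomp hconj i j)
    (mem_closure_mul_self_of_multiplier_eq_one hf hg₀ hg₀1)
  exact hc₀ ((hexp₀.unique h).trans hc)

end Reflections

theorem finite_and_card_le_two {G : Subgroup (Diff 𝕜)}
    (hG : G ≤ (rootsOfUnity 2 𝕜).comap (Units.map multiplierHom))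
    (htriv : ∀ g ∈ G, multiplier g.val = 1 → g = 1) :
    (G : Set (Diff 𝕜)).Finite ∧ Nat.card G ≤ 2 := by
  let φ : G →* rootsOfUnity 2 𝕜 :=
    ((Units.map multiplierHom).comp G.subtype).codRestrict _ fun g => hG g.2
  have hφ : Function.Injective φ := (injective_iff_map_eq_one φ).mpr fun g hg =>
    Subtype.ext (htriv g g.2 (congrArg (fun x : rootsOfUnity 2 𝕜 => ((x : 𝕜ˣ) : 𝕜)) hg))
  have := Finite.of_injective φ hφ
  exact ⟨Set.toFinite _,
    (Nat.card_le_card_of_injective φ hφ).trans (card_rootsOfUnity 𝕜 2)⟩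

end Paper

theorem stmt11_general (ν : ℕ) (f : Fin (ν + 1) → Diff ℝ) (G : Subgroup (Diff ℝ))
    (hG : G = Subgroup.closure (Set.range f))
    (hcomp : (List.ofFn f).prod = 1)
    (hconj : ∀ i j, ∃ g ∈ G, f i * g = g * f j)
    (p : ℕ) (s : ℕ)
    (hmult : ∃ j, multiplier (f j).val ^ (p ^ s) = 1 ∧
      ∀ m : ℕ, 0 < m → m < p ^ s → multiplier (f j).val ^ m ≠ 1) :
    (G : Set (Diff ℝ)).Finite ∧ Nat.card G ≤ 2 ∧ (s = 0 → G = ⊥) := by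
  subst hG
  obtain ⟨j, hj, -⟩ := hmult
  have hf : ∀ i, multiplier (f i).val = multiplier (f j).val := fun i =>
    let ⟨_, _, h⟩ := hconj i j
    multiplier_eq_of_mul_eq_mul h
  have hpow : multiplier (f j).val ^ (ν + 1) = 1 := by
    have h := multiplier_prod_ofFn f
    rw [hcomp, Units.val_one, multiplier_one] at h
    simpa [hf] using h.symm
  rcases pow_eq_one_iff_cases.mp hpow with h | h | ⟨h, -⟩
  · omega
  · rw [closure_eq_bot_of_multiplier_eq_one (fun i => (hf i).trans h) hcomp hconj]
    simp
  · have hG : Subgroup.closure (Set.range f) ≤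
        (rootsOfUnity 2 ℝ).comap (Units.map multiplierHom) :=
      (Subgroup.closure_le _).mpr <| Set.range_subset_iff.mpr fun i => by
        simp [mem_rootsOfUnity, Units.ext_iff, hf i, h]
    obtain ⟨hfin, hcard⟩ := finite_and_card_le_two hG fun g hg hg1 =>
      eq_one_of_mem_closure_of_multiplier_eq_one (fun i => (hf i).trans h) hcomp hconj hg hg1
    exact ⟨hfin, hcard, fun hs => by norm_num [hs, h] at hj⟩

/-- A group of germs of real analytic diffeomorphisms of `(ℝ,0)`
generated by `f₁,…,f_{ν+1}` with `f₁∘⋯∘f_{ν+1} = id`, the `fᵢ` pairwise conjugate in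
`G`, and some multiplier a root of unity of order `p^s` (`p` prime), is finite of
order at most `2`; if `s = 0` it is trivial. -/
theorem stmt11 (ν : ℕ) (f : Fin (ν + 1) → Diff ℝ) (G : Subgroup (Diff ℝ))
    (hG : G = Subgroup.closure (Set.range f))
    (hcomp : (List.ofFn f).prod = 1)
    (hconj : ∀ i j, ∃ g ∈ G, f i * g = g * f j)
    (p : ℕ) (hp : p.Prime) (s : ℕ)
    (hmult : ∃ j, multiplier (f j).val ^ (p ^ s) = 1 ∧
      ∀ m : ℕ, 0 < m → m < p ^ s → multiplier (f j).val ^ m ≠ 1) :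
    (G : Set (Diff ℝ)).Finite ∧ Nat.card G ≤ 2 ∧ (s = 0 → G = ⊥) :=
  stmt11_general ν f G hG hcomp hconj p s hmult
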